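/- Let ξ, μ, β be real numbers with ξ > 2/3, μ ≥ 4/3 and β ≥ 4/7, satisfying the key inequality: for every positive integer m with (m − 1 − 1/μ − 1/β)·ξ > 1 one has m·ξ ≥ ⌈(m − 1 − 1/μ − 1/β)·ξ⌉ + 2. Then ξ ≥ 4/5; moreover, if in addition ξ > 4/5, then (6 − 1 − 1/μ − 1/β)·ξ > 2. -/

import Mathlib

/-!
Write `c = 1 + 1/μ + 1/β ≤ 7/2`. Each application of the key inequality turns a lower bound
`ξ ≥ r` into a better one: if `(m - 7/2) r > k - 1` then `⌈(m - c) ξ⌉ ≥ k`, so `m ξ ≥ k + 2`.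
Starting from `ξ ≥ 2/3`, the values `m = 7, 8, 9, 10` give `ξ ≥ 5/7, 3/4, 7/9, 4/5` in turn.
-/

/-- The key inequality, with `c` standing for `1 + 1/μ + 1/β`. -/
def KeyInequality (ξ c : ℝ) : Prop :=
  ∀ m : ℕ, 0 < m → 1 < ((m : ℝ) - c) * ξ → (⌈((m : ℝ) - c) * ξ⌉ : ℝ) + 2 ≤ m * ξ

namespace KeyInequality

variable {ξ c : ℝ}

theorem int_add_two_le (hkey : KeyInequality ξ c) {m : ℕ} (hm : 0 < m) {k : ℤ} (hk : 2 ≤ k)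
    (hlt : (k : ℝ) - 1 < ((m : ℝ) - c) * ξ) : (k : ℝ) + 2 ≤ m * ξ := by
  have hceil : k ≤ ⌈((m : ℝ) - c) * ξ⌉ := Int.le_ceil_iff.mpr hlt
  have hk' : (2 : ℝ) ≤ k := by exact_mod_cast hk
  have hceil' : (k : ℝ) ≤ ⌈((m : ℝ) - c) * ξ⌉ := by exact_mod_cast hceil
  linarith [hkey m hm (by linarith)]

theorem int_add_two_le_of_le (hkey : KeyInequality ξ c) {C r : ℝ} (hc : c ≤ C) (hr : 0 ≤ r)
    (hrξ : r ≤ ξ) {m : ℕ} (hm : 0 < m) (hCm : C ≤ m) {k : ℤ} (hk : 2 ≤ k)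
    (hlt : (k : ℝ) - 1 < ((m : ℝ) - C) * r) : (k : ℝ) + 2 ≤ m * ξ := by
  refine hkey.int_add_two_le hm hk (hlt.trans_le ?_)
  exact mul_le_mul (by linarith) hrξ hr (by linarith)

end KeyInequality

/-- Numerical argument of Case iii in the proof of Proposition 4.13 and of
cases (3.3), (4.4), (5.2) of Proposition 4.14: under the key inequality, from
`ξ > 2/3`, `μ ≥ 4/3` and `β ≥ 4/7` one deduces `ξ ≥ 4/5`; moreover if
`ξ > 4/5`, then `α(6) > 2`. -/
theorem stmt7 (ξ μ β : ℝ) (hξ : ξ > 2 / 3) (hμ : μ ≥ 4 / 3) (hβ : β ≥ 4 / 7)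
    (key : ∀ m : ℕ, 0 < m → ((m : ℝ) - 1 - 1 / μ - 1 / β) * ξ > 1 →
      (m : ℝ) * ξ ≥ (⌈((m : ℝ) - 1 - 1 / μ - 1 / β) * ξ⌉ : ℝ) + 2) :
    ξ ≥ 4 / 5 ∧ (ξ > 4 / 5 → (6 - 1 - 1 / μ - 1 / β) * ξ > 2) := by
  have hkey : KeyInequality ξ (1 + 1 / μ + 1 / β) := by
    intro m hm
    simpa only [sub_sub] using key m hm
  have hc : 1 + 1 / μ + 1 / β ≤ 7 / 2 := by
    have hμ' := one_div_le_one_div_of_le (by norm_num) hμ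
    have hβ' := one_div_le_one_div_of_le (by norm_num) hβ
    norm_num at hμ' hβ' ⊢
    linarith
  have h7 := hkey.int_add_two_le_of_le (m := 7) (k := 3) hc (by norm_num) hξ.le
    (by norm_num) (by norm_num) (by norm_num) (by norm_num)
  have h8 := hkey.int_add_two_le_of_le (m := 8) (k := 4) (r := 5 / 7) hc (by norm_num)
    (by push_cast at h7; linarith) (by norm_num) (by norm_num) (by norm_num) (by norm_num)
  have h9 := hkey.int_add_two_le_of_le (m := 9) (k := 5) (r := 3 / 4) hc (by norm_num)
    (by push_cast at h8; linarith) (by norm_num) (by norm_num) (by norm_num) (by norm_num)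
  have h10 := hkey.int_add_two_le_of_le (m := 10) (k := 6) (r := 7 / 9) hc (by norm_num)
    (by push_cast at h9; linarith) (by norm_num) (by norm_num) (by norm_num) (by norm_num)
  push_cast at h10
  refine ⟨by linarith, fun hξ' => ?_⟩
  calc (2 : ℝ) < 5 / 2 * ξ := by linarith
    _ ≤ (6 - 1 - 1 / μ - 1 / β) * ξ := mul_le_mul_of_nonneg_right (by linarith) (by linarith)
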